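/- Let x be large, let p ≤ √(x/2) be a prime, let √(2x) < Q ≤ x, and let 𝒜 = (a_n)_{n ≤ x} be the sequence a_n := 1_{p | n}. Then the exact identity V(𝒜,x,Q) = V(ℕ, x/p, Q) − Σ_{Q/2 < q ≤ Q, p | q} Σ_{1 ≤ a ≤ q} | ℕ(x/p; q, a) − Aver(ℕ, x/p; q, (a,q)) |² + V(ℕ, x/p, Q/p) holds, where ℕ denotes the constant sequence equal to 1. -/

import Mathlib

/-!
Multiples of `p` up to `x` are `p m` with `m ≤ x/p`, so the class sums of `𝒜` are class sums
of `ℕ` up to `x/p`. If `p ∤ q`, the class `p c mod q` of `𝒜` is the class `c mod q` of `ℕ`, and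
multiplication by the unit `p` permutes the classes mod `q` preserving `(b,q)`: the `q`-term of
`V(𝒜,x,Q)` equals that of `V(ℕ,x/p,Q)`. If `q = p r`, only the classes `b = p c` are nonempty,
the class `p c mod p r` of `𝒜` is the class `c mod r` of `ℕ`, and `(p c, p r) = p (c, r)`: the
`q`-term equals the `r`-term of `V(ℕ,x/p,Q/p)`, and `Q/2 < p r ≤ Q` iff `Q/2p < r ≤ Q/p`.
-/

open scoped Classical

/-- `𝒜(z;q,b) := Σ_{n ≤ z, n ≡ b (mod q)} a_n`, for a real sequence `a`. -/
noncomputable def seqSum (a : ℕ → ℝ) (z : ℝ) (q b : ℕ) : ℝ :=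
  ∑ n ∈ (Finset.Icc 1 ⌊z⌋₊).filter (fun n => n % q = b % q), a n

/-- `Aver(𝒜,z;q,h) := (1/φ(q/h)) Σ_{1 ≤ b ≤ q, (b,q)=h} 𝒜(z;q,b)`, for `h ∣ q`. -/
noncomputable def seqAver (a : ℕ → ℝ) (z : ℝ) (q h : ℕ) : ℝ :=
  (1 / (Nat.totient (q / h) : ℝ)) *
    ∑ b ∈ (Finset.Icc 1 q).filter (fun b => Nat.gcd b q = h), seqSum a z q b

/-- The Barban–Davenport–Halberstam type variance
`V(𝒜,x,Q) := Σ_{Q/2 < q ≤ Q} Σ_{1 ≤ b ≤ q} |𝒜(x;q,b) − Aver(𝒜,x;q,(b,q))|²`. -/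
noncomputable def varV (a : ℕ → ℝ) (x Q : ℝ) : ℝ :=
  ∑ q ∈ Finset.Ioc ⌊Q / 2⌋₊ ⌊Q⌋₊, ∑ b ∈ Finset.Icc 1 q,
    (seqSum a x q b - seqAver a x q (Nat.gcd b q)) ^ 2

open Finset Function

namespace Nat

variable {M : Type*} [AddCommMonoid M] {p : ℕ}

theorem Ioc_filter_dvd_eq_map (hp : 0 < p) (a b : ℕ) :
    {n ∈ Ioc a b | p ∣ n} = (Ioc (a / p) (b / p)).map ⟨(p * ·), mul_right_injective₀ hp.ne'⟩ := by
  ext n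
  simp only [mem_filter, mem_Ioc, mem_map, Embedding.coeFn_mk]
  constructor
  · rintro ⟨⟨ha, hb⟩, m, rfl⟩
    exact ⟨m, ⟨(Nat.div_lt_iff_lt_mul hp).2 (by linarith),
      (Nat.le_div_iff_mul_le hp).2 (by linarith)⟩, rfl⟩
  · rintro ⟨m, ⟨ha, hb⟩, rfl⟩
    exact ⟨⟨by rw [Nat.div_lt_iff_lt_mul hp] at ha; linarith,
      by rw [Nat.le_div_iff_mul_le hp] at hb; linarith⟩, dvd_mul_right p m⟩

theorem sum_Ioc_filter_dvd (hp : 0 < p) (a b : ℕ) (f : ℕ → M) :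
    ∑ n ∈ Ioc a b with p ∣ n, f n = ∑ m ∈ Ioc (a / p) (b / p), f (p * m) := by
  rw [Ioc_filter_dvd_eq_map hp, sum_map]
  rfl

theorem sum_Icc_one_eq_sum_mul_of_eq_zero_of_not_dvd (hp : 0 < p) {f : ℕ → M}
    (hf : ∀ n, ¬ p ∣ n → f n = 0) (N : ℕ) :
    ∑ n ∈ Icc 1 N, f n = ∑ m ∈ Icc 1 (N / p), f (p * m) := by
  have hIcc (k : ℕ) : Icc 1 k = Ioc 0 k := Icc_add_one_left_eq_Ioc 0 k
  rw [hIcc, hIcc, ← sum_filter_of_ne (p := (p ∣ ·)) fun n _ hn => not_imp_comm.1 (hf n) hn,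
    sum_Ioc_filter_dvd hp, Nat.zero_div]

end Nat

theorem Finset.sum_range_eq_sum_zmod_val {M : Type*} [AddCommMonoid M] {q : ℕ} [NeZero q]
    (g : ℕ → M) :
    ∑ b ∈ range q, g b = ∑ i : ZMod q, g i.val :=
  sum_nbij' (fun b => (b : ZMod q)) ZMod.val (by simp) (fun i _ => mem_range.2 (ZMod.val_lt i))
    (fun b hb => ZMod.val_cast_of_lt (mem_range.1 hb)) (fun i _ => ZMod.natCast_zmod_val i)
    (fun b hb => by rw [ZMod.val_cast_of_lt (mem_range.1 hb)])

namespace Function.Periodic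

variable {M : Type*} [AddCommMonoid M] {f : ℕ → M} {q : ℕ}

theorem sum_Icc_one_eq_sum_range (hf : Periodic f q) :
    ∑ b ∈ Icc 1 q, f b = ∑ b ∈ range q, f b := by
  calc ∑ b ∈ Icc 1 q, f b = ∑ b ∈ Ico 1 (1 + q), f (b % q) := by
        rw [add_comm, Ico_add_one_right_eq_Icc]
        exact sum_congr rfl fun b _ => (hf.map_mod_nat b).symm
    _ = (((Multiset.Ico 1 (1 + q)).map (· % q)).map f).sum := by
        rw [Multiset.map_map, ← sum_map_val]; rfl
    _ = ∑ b ∈ range q, f b := by rw [Nat.multiset_Ico_map_mod]; rfl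

theorem sum_Icc_one_comp_mul_of_coprime (hf : Periodic f q) {u : ℕ} (hu : u.Coprime q) :
    ∑ b ∈ Icc 1 q, f (u * b) = ∑ b ∈ Icc 1 q, f b := by
  rcases eq_or_ne q 0 with rfl | hq
  · simp
  have : NeZero q := ⟨hq⟩
  have hfu : Periodic (fun b => f (u * b)) q := fun b => by
    simpa only [mul_add, Nat.cast_id] using hf.nat_mul u (u * b)
  rw [hfu.sum_Icc_one_eq_sum_range, hf.sum_Icc_one_eq_sum_range,
    sum_range_eq_sum_zmod_val, sum_range_eq_sum_zmod_val]
  calc ∑ i : ZMod q, f (u * i.val) = ∑ i : ZMod q, f (ZMod.unitOfCoprime u hu * i).val := by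
        refine sum_congr rfl fun i _ => ?_
        rw [ZMod.coe_unitOfCoprime, ZMod.val_mul, ZMod.val_natCast, Nat.mod_mul_mod, hf.map_mod_nat]
    _ = ∑ i : ZMod q, f i.val := Equiv.sum_comp (Units.mulLeft _) (fun i : ZMod q => f i.val)

end Function.Periodic

noncomputable def residueAverage (s : ℕ → ℝ) (q h : ℕ) : ℝ :=
  (1 / (Nat.totient (q / h) : ℝ)) * ∑ b ∈ Icc 1 q with Nat.gcd b q = h, s b

noncomputable def residueVariance (s : ℕ → ℝ) (q : ℕ) : ℝ :=
  ∑ b ∈ Icc 1 q, (s b - residueAverage s q (Nat.gcd b q)) ^ 2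

theorem sum_sq_sub_seqAver_eq_residueVariance (a : ℕ → ℝ) (z : ℝ) (q : ℕ) :
    ∑ b ∈ Icc 1 q, (seqSum a z q b - seqAver a z q (Nat.gcd b q)) ^ 2
      = residueVariance (seqSum a z q) q :=
  rfl

section Coprime

variable {s : ℕ → ℝ} {q u : ℕ}

theorem residueAverage_comp_mul_of_coprime (hs : Periodic s q) (hu : u.Coprime q) (h : ℕ) :
    residueAverage (fun b => s (u * b)) q h = residueAverage s q h := by
  unfold residueAverage
  rw [sum_filter, sum_filter]
  have hg : Periodic (fun b => if Nat.gcd b q = h then s b else 0) q := fun b => by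
    simp only [Nat.gcd_add_self_left, hs b]
  simpa only [Nat.Coprime.gcd_mul_left_cancel _ hu] using
    congrArg (_ * ·) (hg.sum_Icc_one_comp_mul_of_coprime hu)

theorem residueVariance_comp_mul_of_coprime (hs : Periodic s q) (hu : u.Coprime q) :
    residueVariance (fun b => s (u * b)) q = residueVariance s q := by
  unfold residueVariance
  have hg : Periodic (fun b => (s b - residueAverage s q (Nat.gcd b q)) ^ 2) q := fun b => by
    simp only [Nat.gcd_add_self_left, hs b]
  simpa only [residueAverage_comp_mul_of_coprime hs hu, Nat.Coprime.gcd_mul_left_cancel _ hu] using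
    hg.sum_Icc_one_comp_mul_of_coprime hu

end Coprime

section Multiples

variable {s : ℕ → ℝ} {p : ℕ} (hs : ∀ b, ¬ p ∣ b → s b = 0)
include hs

theorem residueAverage_eq_zero_of_not_dvd {q h : ℕ} (hpq : p ∣ q) (hh : ¬ p ∣ h) :
    residueAverage s q h = 0 := by
  refine mul_eq_zero_of_right _ (sum_eq_zero fun b hb => hs b fun hpb => hh ?_)
  exact (mem_filter.1 hb).2 ▸ Nat.dvd_gcd hpb hpq

theorem residueAverage_mul_mul (hp : 0 < p) (r k : ℕ) :
    residueAverage s (p * r) (p * k) = residueAverage (fun m => s (p * m)) r k := by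
  unfold residueAverage
  rw [Nat.mul_div_mul_left _ _ hp, sum_filter, sum_filter,
    Nat.sum_Icc_one_eq_sum_mul_of_eq_zero_of_not_dvd hp fun n hn => by simp [hs n hn],
    Nat.mul_div_cancel_left _ hp]
  simp only [Nat.gcd_mul_left, Nat.mul_right_inj hp.ne']

theorem residueVariance_mul (hp : 0 < p) (r : ℕ) :
    residueVariance s (p * r) = residueVariance (fun m => s (p * m)) r := by
  unfold residueVariance
  rw [Nat.sum_Icc_one_eq_sum_mul_of_eq_zero_of_not_dvd hp, Nat.mul_div_cancel_left _ hp]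
  · simp only [Nat.gcd_mul_left, residueAverage_mul_mul hs hp]
  · intro b hb
    rw [hs b hb, residueAverage_eq_zero_of_not_dvd hs (dvd_mul_right p r)
      fun h => hb (h.trans (Nat.gcd_dvd_left _ _)), sub_zero, zero_pow two_ne_zero]

end Multiples

theorem seqSum_periodic (a : ℕ → ℝ) (z : ℝ) (q : ℕ) : Periodic (seqSum a z q) q := fun b => by
  simp only [seqSum, Nat.add_mod_right]

section Indicator

variable {p : ℕ} (x : ℝ)

theorem seqSum_indicator_mul (hp : 0 < p) {q q' : ℕ} (c : ℕ)
    (hmod : ∀ m, p * m ≡ p * c [MOD q] ↔ m ≡ c [MOD q']) :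
    seqSum (fun n => if p ∣ n then 1 else 0) x q (p * c) = seqSum (fun _ => 1) (x / p) q' c := by
  unfold seqSum
  rw [sum_filter, sum_filter, Nat.floor_div_natCast,
    Nat.sum_Icc_one_eq_sum_mul_of_eq_zero_of_not_dvd hp fun _ hn => by simp [hn]]
  refine sum_congr rfl fun m _ => ?_
  simp only [dvd_mul_right, if_true]
  exact if_congr (hmod m) rfl rfl

theorem seqSum_indicator_eq_zero {q b : ℕ} (hpq : p ∣ q) (hb : ¬ p ∣ b) :
    seqSum (fun n => if p ∣ n then 1 else 0) x q b = 0 :=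
  sum_eq_zero fun _ hn => if_neg fun hpn =>
    hb ((Nat.dvd_mod_iff hpq).1 ((mem_filter.1 hn).2 ▸ (Nat.dvd_mod_iff hpq).2 hpn))

end Indicator

theorem statement_12_general (x Q : ℝ) (p : ℕ) (hp : p.Prime) :
    varV (fun n => if p ∣ n then 1 else 0) x Q
      = varV (fun _ => 1) (x / p) Q
        - (∑ q ∈ (Finset.Ioc ⌊Q / 2⌋₊ ⌊Q⌋₊).filter (fun q => p ∣ q),
            ∑ b ∈ Finset.Icc 1 q,
              (seqSum (fun _ => 1) (x / p) q b -
                seqAver (fun _ => 1) (x / p) q (Nat.gcd b q)) ^ 2)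
        + varV (fun _ => 1) (x / p) (Q / p) := by
  have h_coprime (q : ℕ) (hq : ¬ p ∣ q) :
      residueVariance (seqSum (fun n => if p ∣ n then 1 else 0) x q) q
        = residueVariance (seqSum (fun _ => 1) (x / p) q) q := by
    have hpq : p.Coprime q := (Nat.Prime.coprime_iff_not_dvd hp).2 hq
    rw [← residueVariance_comp_mul_of_coprime (seqSum_periodic _ x q) hpq]
    congr 1
    funext c
    exact seqSum_indicator_mul x hp.pos c fun m =>
      ⟨Nat.ModEq.cancel_left_of_coprime (Nat.coprime_comm.1 hpq), Nat.ModEq.mul_left p⟩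
  have h_dvd (r : ℕ) :
      residueVariance (seqSum (fun n => if p ∣ n then 1 else 0) x (p * r)) (p * r)
        = residueVariance (seqSum (fun _ => 1) (x / p) r) r := by
    rw [residueVariance_mul (fun b hb => seqSum_indicator_eq_zero x (dvd_mul_right p r) hb) hp.pos]
    congr 1
    funext c
    exact seqSum_indicator_mul x hp.pos c fun m => Nat.ModEq.mul_left_cancel_iff' hp.ne_zero
  simp only [varV, sum_sq_sub_seqAver_eq_residueVariance]
  rw [div_right_comm Q, Nat.floor_div_natCast, Nat.floor_div_natCast,
    ← sum_filter_add_sum_filter_not _ (p ∣ ·), ← sum_filter_add_sum_filter_not (Ioc _ _) (p ∣ ·),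
    Nat.sum_Ioc_filter_dvd hp.pos, sum_congr rfl fun q hq => h_coprime q (mem_filter.1 hq).2]
  simp only [h_dvd]
  ring

/-- The worked example from the introduction: for `x` large, a prime `p ≤ √(x/2)`,
`√(2x) < Q ≤ x`, and the sequence `a_n := 1_{p ∣ n}`, the exact identity
`V(𝒜,x,Q) = V(ℕ,x/p,Q)
  − Σ_{Q/2 < q ≤ Q, p ∣ q} Σ_{1 ≤ b ≤ q} |ℕ(x/p;q,b) − Aver(ℕ,x/p;q,(b,q))|²
  + V(ℕ,x/p,Q/p)` holds, where `ℕ` denotes the constant sequence equal to `1`. -/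
theorem statement_12 (x Q : ℝ) (p : ℕ) (hp : p.Prime) (hx : 2 ≤ x)
    (hpx : (p : ℝ) ≤ Real.sqrt (x / 2)) (hQ1 : Real.sqrt (2 * x) < Q) (hQ2 : Q ≤ x) :
    varV (fun n => if p ∣ n then 1 else 0) x Q
      = varV (fun _ => 1) (x / p) Q
        - (∑ q ∈ (Finset.Ioc ⌊Q / 2⌋₊ ⌊Q⌋₊).filter (fun q => p ∣ q),
            ∑ b ∈ Finset.Icc 1 q,
              (seqSum (fun _ => 1) (x / p) q b -
                seqAver (fun _ => 1) (x / p) q (Nat.gcd b q)) ^ 2)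
        + varV (fun _ => 1) (x / p) (Q / p) :=
  statement_12_general x Q p hp
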